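/- Let (X,x), (Y,y) be point-masses in the hyperbolic plane and let (Z,z) = (X,x)*(Y,y) be their centroid. Then for every hyperbolic line m, the signed moment satisfies M_m(Z,z) = M_m(X,x) + M_m(Y,y), where M_m(P,p) = σ_m(P)·p·sinh(d(P,m)) and σ_m(P) = +1, -1, or 0 according as P is in the left half-plane of the directed line m, the right half-plane, or on m. -/

import Mathlib

open Real UpperHalfPlane

noncomputable section

/-- `Z` lies on the geodesic segment from `X` to `Y` (hyperbolic betweenness). -/
def HBtw (X Z Y : ℍ) : Prop := dist X Z + dist Z Y = dist X Y

/-- `(Z, z)` is the hyperbolic centroid of the point-masses `(X, x)` and `(Y, y)`: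
`Z` lies between `X` and `Y`, the moments about `Z` balance, and
`z = x·cosh d(X,Z) + y·cosh d(Y,Z)`. -/
def IsCentroid (X : ℍ) (x : ℝ) (Y : ℍ) (y : ℝ) (Z : ℍ) (z : ℝ) : Prop :=
  HBtw X Z Y ∧ x * Real.sinh (dist X Z) = y * Real.sinh (dist Y Z) ∧
    z = x * Real.cosh (dist X Z) + y * Real.cosh (dist Y Z)

/-- A hyperbolic line in the upper half-plane model: a vertical ray or a
semicircle centered on the real axis. -/
inductive HLine : Type
  | vertical (a : ℝ) : HLine
  | circle (c r : ℝ) (hr : 0 < r) : HLine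

/-- The set of points of a hyperbolic line. -/
def HLine.carrier : HLine → Set ℍ
  | .vertical a => {z : ℍ | (z : ℂ).re = a}
  | .circle c r _ => {z : ℍ | ‖(z : ℂ) - (c : ℂ)‖ = r}

/-- The side function of a (directed) hyperbolic line: `1` on one open half-plane,
`-1` on the other, `0` on the line itself. -/
def HLine.sgn : HLine → ℍ → ℝ
  | .vertical a, z => Real.sign ((z : ℂ).re - a)
  | .circle c r _, z => Real.sign (‖(z : ℂ) - (c : ℂ)‖ - r)

/-!
Embed `ℍ` into the hyperboloid `{t | ⟪t, t⟫ = -1, t₀ > 0}` of Minkowski space `ℝ^{2,1}`, so that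
`⟪P, Q⟫ = -cosh d(P, Q)`. The centroid conditions then say that `w = x X + y Y - z Z` is orthogonal
to `X`, `Y` and `Z`, hence null and orthogonal to a timelike vector, hence zero: the centroid is
the weighted sum of the point-masses in the hyperboloid model. Every line `m` is the zero set of
`⟪n, ·⟫` for a unit spacelike normal `n`, and `σ_m(P) sinh d(P, m) = ⟪n, P⟫`; the moment about `m`
is therefore a linear functional of the weighted point and is additive.
-/

lemma Real.sign_eq_coe_sign (r : ℝ) : Real.sign r = (SignType.sign r : ℝ) := by
  rcases lt_trichotomy r 0 with h | rfl | h
  · simp [Real.sign_of_neg h, h]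
  · simp
  · simp [Real.sign_of_pos h, h]

lemma Real.sign_mul_abs (r : ℝ) : Real.sign r * |r| = r := by
  rw [Real.sign_eq_coe_sign, _root_.sign_mul_abs]

lemma Real.sign_mul_of_pos {k : ℝ} (hk : 0 < k) (r : ℝ) : Real.sign (k * r) = Real.sign r := by
  simp [Real.sign_eq_coe_sign, sign_mul, sign_pos hk]

def minkowski : LinearMap.BilinForm ℝ (Fin 3 → ℝ) :=
  LinearMap.mk₂ ℝ (fun u v => u 1 * v 1 + u 2 * v 2 - u 0 * v 0)
    (fun _ _ _ => by simp only [Pi.add_apply]; ring)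
    (fun _ _ _ => by simp only [Pi.smul_apply, smul_eq_mul]; ring)
    (fun _ _ _ => by simp only [Pi.add_apply]; ring)
    (fun _ _ _ => by simp only [Pi.smul_apply, smul_eq_mul]; ring)

@[simp]
lemma minkowski_apply (u v : Fin 3 → ℝ) :
    minkowski u v = u 1 * v 1 + u 2 * v 2 - u 0 * v 0 :=
  rfl

lemma minkowski_comm (u v : Fin 3 → ℝ) : minkowski u v = minkowski v u := by
  simp only [minkowski_apply]
  ring

/-- The reverse Cauchy–Schwarz inequality for future-pointing causal vectors. -/
lemma sqrt_mul_le_neg_minkowski {u v : Fin 3 → ℝ} (hu : 0 < u 0) (hv : 0 < v 0)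
    (huu : minkowski u u ≤ 0) (hvv : minkowski v v ≤ 0) :
    √(minkowski u u * minkowski v v) ≤ -minkowski u v := by
  simp only [minkowski_apply] at *
  have hdot : u 1 * v 1 + u 2 * v 2 ≤ u 0 * v 0 := by
    nlinarith [sq_nonneg (u 1 * v 2 - u 2 * v 1), mul_pos hu hv]
  refine Real.sqrt_le_iff.mpr ⟨by linarith, ?_⟩
  -- Lagrange's identity for `(u₁, u₂)` and `u₀ (v₁, v₂) - v₀ (u₁, u₂)`, whose cross product is
  -- `u₀ (u₁ v₂ - u₂ v₁)`.
  have hcross : (u 1 * v 2 - u 2 * v 1) ^ 2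
      ≤ (u 0 * v 1 - v 0 * u 1) ^ 2 + (u 0 * v 2 - v 0 * u 2) ^ 2 := by
    refine le_of_mul_le_mul_left ?_ (by positivity : 0 < u 0 ^ 2)
    nlinarith [mul_nonneg (by linarith : 0 ≤ u 0 * u 0 - (u 1 * u 1 + u 2 * u 2))
      (by positivity : 0 ≤ (u 0 * v 1 - v 0 * u 1) ^ 2 + (u 0 * v 2 - v 0 * u 2) ^ 2),
      sq_nonneg (u 1 * (u 0 * v 1 - v 0 * u 1) + u 2 * (u 0 * v 2 - v 0 * u 2))]
  nlinarith [hcross]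

lemma zero_pos_of_minkowski_neg {u v : Fin 3 → ℝ} (hu : 0 < u 0) (huu : minkowski u u < 0)
    (hvv : minkowski v v < 0) (huv : minkowski u v < 0) : 0 < v 0 := by
  by_contra! hv
  have hv' : 0 < (-v) 0 := by
    refine lt_of_le_of_ne (by simpa using hv) fun h => ?_
    have hv0 : v 0 = 0 := by simpa using h.symm
    simp only [minkowski_apply, hv0] at hvv
    nlinarith
  have hrev := sqrt_mul_le_neg_minkowski hu hv' huu.le
    (by simpa only [map_neg, LinearMap.neg_apply, neg_neg] using hvv.le)
  simp only [map_neg, LinearMap.neg_apply, neg_neg] at hrev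
  linarith [Real.sqrt_nonneg (minkowski u u * minkowski v v)]

lemma eq_zero_of_minkowski_eq_zero {t w : Fin 3 → ℝ} (ht : minkowski t t < 0)
    (htw : minkowski t w = 0) (hww : minkowski w w = 0) : w = 0 := by
  simp only [minkowski_apply] at *
  have hcs : (t 0 * w 0) ^ 2 ≤ (t 1 * t 1 + t 2 * t 2) * (w 0 * w 0) := by
    rw [show t 0 * w 0 = t 1 * w 1 + t 2 * w 2 by linarith,
      show w 0 * w 0 = w 1 * w 1 + w 2 * w 2 by linarith]
    nlinarith [sq_nonneg (t 1 * w 2 - t 2 * w 1)]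
  have h0 : w 0 = 0 := by
    have : w 0 ^ 2 * (t 0 * t 0 - (t 1 * t 1 + t 2 * t 2)) ≤ 0 := by nlinarith
    exact pow_eq_zero_iff two_ne_zero |>.mp
      (le_antisymm (nonpos_of_mul_nonpos_left this (by linarith)) (sq_nonneg _))
  rw [h0, mul_zero, sub_zero] at hww
  have h1 : w 1 = 0 := by nlinarith [sq_nonneg (w 1), sq_nonneg (w 2)]
  have h2 : w 2 = 0 := by nlinarith [sq_nonneg (w 1), sq_nonneg (w 2)]
  funext i
  fin_cases i <;> assumption

namespace UpperHalfPlane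

def toHyperboloid (P : ℍ) : Fin 3 → ℝ :=
  ![(P.re ^ 2 + P.im ^ 2 + 1) / (2 * P.im), P.re / P.im, (P.re ^ 2 + P.im ^ 2 - 1) / (2 * P.im)]

lemma toHyperboloid_zero_pos (P : ℍ) : 0 < P.toHyperboloid 0 := by
  have := P.im_pos
  simp only [toHyperboloid, Matrix.cons_val_zero]
  positivity

lemma minkowski_toHyperboloid (P Q : ℍ) :
    minkowski P.toHyperboloid Q.toHyperboloid = -cosh (dist P Q) := by
  have := P.im_pos
  have := Q.im_pos
  rw [cosh_dist']
  simp [toHyperboloid]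
  field_simp
  ring

lemma minkowski_toHyperboloid_self (P : ℍ) :
    minkowski P.toHyperboloid P.toHyperboloid = -1 := by
  simp only [minkowski_toHyperboloid, dist_self, cosh_zero]

lemma exists_toHyperboloid_eq {t : Fin 3 → ℝ} (ht : minkowski t t = -1) (h0 : 0 < t 0) :
    ∃ P : ℍ, P.toHyperboloid = t := by
  simp only [minkowski_apply] at ht
  have h02 : 0 < t 0 - t 2 := by nlinarith [sq_nonneg (t 1)]
  refine ⟨⟨⟨t 1 / (t 0 - t 2), 1 / (t 0 - t 2)⟩, by simpa using h02⟩, ?_⟩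
  funext i
  fin_cases i <;> simp [toHyperboloid] <;> field_simp <;> linear_combination ht

theorem sinh_infDist_setOf_minkowski_eq_zero {n : Fin 3 → ℝ} (hn : minkowski n n = 1) (P : ℍ) :
    sinh (Metric.infDist P {Q | minkowski n Q.toHyperboloid = 0})
      = |minkowski n P.toHyperboloid| := by
  set t := P.toHyperboloid
  have htt : minkowski t t = -1 := P.minkowski_toHyperboloid_self
  set β := minkowski n t
  set s := √(1 + β ^ 2)
  have hs : s ^ 2 = 1 + β ^ 2 := Real.sq_sqrt (by positivity)
  have hs0 : 0 < s := by positivity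
  -- The foot of the perpendicular from `P` is `t'` normalized, `t'` the projection of `t` on `n^⊥`.
  set t' := t - β • n
  have ht't' : minkowski t' t' = -s ^ 2 := by
    simp only [t', map_sub, map_smul, LinearMap.sub_apply, LinearMap.smul_apply, smul_eq_mul,
      minkowski_comm t n, hn, htt, hs, β]
    ring
  have htt' : minkowski t t' = -s ^ 2 := by
    simp only [t', map_sub, map_smul, smul_eq_mul, minkowski_comm t n, htt, hs, β]
    ring
  have ht'0 : 0 < t' 0 := zero_pos_of_minkowski_neg P.toHyperboloid_zero_pos
    (by linarith) (by nlinarith) (by nlinarith)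
  obtain ⟨F, hF⟩ := exists_toHyperboloid_eq (t := s⁻¹ • t')
    (by simp only [map_smul, LinearMap.smul_apply, smul_eq_mul, ht't']; field_simp)
    (by simp only [Pi.smul_apply, smul_eq_mul]; positivity)
  have hFmem : minkowski n F.toHyperboloid = 0 := by
    simp only [hF, t', map_smul, map_sub, smul_eq_mul, hn, β]
    ring
  have hcoshF : cosh (dist P F) = s := by
    rw [← neg_neg (cosh _), ← minkowski_toHyperboloid, hF, map_smul, smul_eq_mul, htt']
    field_simp
  have hle : ∀ Q : ℍ, minkowski n Q.toHyperboloid = 0 → dist P F ≤ dist P Q := by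
    intro Q hQ
    have hcoshQ : cosh (dist P Q) = -minkowski t' Q.toHyperboloid := by
      simp only [t', map_sub, map_smul, LinearMap.sub_apply, LinearMap.smul_apply, smul_eq_mul,
        hQ, minkowski_toHyperboloid, t]
      ring
    have hrev := sqrt_mul_le_neg_minkowski ht'0 Q.toHyperboloid_zero_pos (by nlinarith)
      (by rw [minkowski_toHyperboloid_self]; norm_num)
    rw [ht't', minkowski_toHyperboloid_self, neg_mul_neg, mul_one, Real.sqrt_sq hs0.le,
      ← hcoshQ, ← hcoshF] at hrev
    simpa [abs_of_nonneg dist_nonneg] using Real.cosh_le_cosh.mp hrev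
  have hinf : Metric.infDist P {Q | minkowski n Q.toHyperboloid = 0} = dist P F :=
    le_antisymm (Metric.infDist_le_dist_of_mem hFmem)
      ((Metric.le_infDist ⟨F, hFmem⟩).mpr fun Q hQ => hle Q hQ)
  rw [hinf, ← pow_left_inj₀ (sinh_nonneg_iff.mpr dist_nonneg) (abs_nonneg β) two_ne_zero, sq_abs]
  nlinarith [cosh_sq (dist P F)]

end UpperHalfPlane

theorem IsCentroid.smul_toHyperboloid_add_smul {X Y Z : ℍ} {x y z : ℝ}
    (hc : IsCentroid X x Y y Z z) :
    x • X.toHyperboloid + y • Y.toHyperboloid = z • Z.toHyperboloid := by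
  obtain ⟨hXZY, hmoment, hz⟩ := hc
  have hXY : cosh (dist X Y)
      = cosh (dist X Z) * cosh (dist Y Z) + sinh (dist X Z) * sinh (dist Y Z) := by
    rw [← hXZY, dist_comm Z Y, cosh_add]
  obtain ⟨w, hw⟩ : ∃ w, w = x • X.toHyperboloid + y • Y.toHyperboloid - z • Z.toHyperboloid :=
    ⟨_, rfl⟩
  have hwP : ∀ P : ℍ, minkowski P.toHyperboloid w
      = z * cosh (dist Z P) - x * cosh (dist X P) - y * cosh (dist Y P) := by
    intro P
    rw [hw, minkowski_comm]
    simp only [map_sub, map_add, map_smul, LinearMap.sub_apply, LinearMap.add_apply,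
      LinearMap.smul_apply, smul_eq_mul, minkowski_toHyperboloid]
    ring
  have hwX : minkowski X.toHyperboloid w = 0 := by
    rw [hwP, dist_self, cosh_zero, dist_comm Y X, hXY, dist_comm Z X]
    linear_combination cosh (dist X Z) * hz + x * cosh_sq (dist X Z) + sinh (dist X Z) * hmoment
  have hwY : minkowski Y.toHyperboloid w = 0 := by
    rw [hwP, dist_self, cosh_zero, hXY, dist_comm Z Y]
    linear_combination cosh (dist Y Z) * hz + y * cosh_sq (dist Y Z) - sinh (dist Y Z) * hmoment
  have hwZ : minkowski Z.toHyperboloid w = 0 := by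
    rw [hwP, dist_self, cosh_zero]
    linear_combination hz
  have hww : minkowski w w = 0 := by
    nth_rw 1 [hw]
    simp only [map_sub, map_add, map_smul, LinearMap.sub_apply, LinearMap.add_apply,
      LinearMap.smul_apply, smul_eq_mul, hwX, hwY, hwZ]
    ring
  rw [← sub_eq_zero, ← hw]
  exact eq_zero_of_minkowski_eq_zero (by rw [minkowski_toHyperboloid_self]; norm_num) hwX hww

namespace HLine

def normal : HLine → Fin 3 → ℝ
  | .vertical a => ![a, 1, a]
  | .circle c r _ => ![-(1 + c ^ 2 - r ^ 2) / (2 * r), -c / r, (1 - c ^ 2 + r ^ 2) / (2 * r)]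

lemma minkowski_normal_self (ℓ : HLine) : minkowski ℓ.normal ℓ.normal = 1 := by
  cases ℓ with
  | vertical a => simp [normal]
  | circle c r hr =>
    simp [normal]
    field_simp
    ring

lemma minkowski_normal_vertical (a : ℝ) (P : ℍ) :
    minkowski (vertical a).normal P.toHyperboloid = P.im⁻¹ * (P.re - a) := by
  have := P.im_pos
  simp [normal, toHyperboloid]
  field_simp
  ring

lemma minkowski_normal_circle (c r : ℝ) (hr : 0 < r) (P : ℍ) :
    minkowski (circle c r hr).normal P.toHyperboloid
      = (‖(P : ℂ) - c‖ ^ 2 - r ^ 2) / (2 * r * P.im) := by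
  have := P.im_pos
  have hnorm : ‖(P : ℂ) - c‖ ^ 2 = (P.re - c) ^ 2 + P.im ^ 2 := by
    simp [Complex.sq_norm, Complex.normSq_apply]
    ring
  rw [hnorm]
  simp [normal, toHyperboloid]
  field_simp
  ring

lemma sign_minkowski_normal (ℓ : HLine) (P : ℍ) :
    Real.sign (minkowski ℓ.normal P.toHyperboloid) = ℓ.sgn P := by
  have := P.im_pos
  cases ℓ with
  | vertical a =>
    rw [minkowski_normal_vertical, Real.sign_mul_of_pos (by positivity)]
    simp [sgn]
  | circle c r hr =>
    rw [minkowski_normal_circle, show ∀ s : ℝ, (s ^ 2 - r ^ 2) / (2 * r * P.im)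
      = (s + r) / (2 * r * P.im) * (s - r) by intro s; ring,
      Real.sign_mul_of_pos (by positivity)]
    rfl

lemma carrier_eq (ℓ : HLine) : ℓ.carrier = {Q | minkowski ℓ.normal Q.toHyperboloid = 0} := by
  ext Q
  rw [Set.mem_ofPred_eq, ← Real.sign_eq_zero_iff, sign_minkowski_normal]
  cases ℓ <;> simp [carrier, sgn, Real.sign_eq_zero_iff, sub_eq_zero]

lemma sgn_mul_sinh_infDist (ℓ : HLine) (P : ℍ) :
    ℓ.sgn P * sinh (Metric.infDist P ℓ.carrier) = minkowski ℓ.normal P.toHyperboloid := by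
  rw [← sign_minkowski_normal, carrier_eq,
    sinh_infDist_setOf_minkowski_eq_zero ℓ.minkowski_normal_self, Real.sign_mul_abs]

end HLine

theorem moment_additive_general (X Y Z : ℍ) (x y z : ℝ)
    (hc : IsCentroid X x Y y Z z) (ℓ : HLine) (ε : ℝ) :
    ε * ℓ.sgn Z * z * Real.sinh (Metric.infDist Z ℓ.carrier)
      = ε * ℓ.sgn X * x * Real.sinh (Metric.infDist X ℓ.carrier)
        + ε * ℓ.sgn Y * y * Real.sinh (Metric.infDist Y ℓ.carrier) := by
  have h := congrArg (minkowski ℓ.normal) hc.smul_toHyperboloid_add_smul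
  simp only [map_add, map_smul, smul_eq_mul] at h
  linear_combination ε * z * ℓ.sgn_mul_sinh_infDist Z - ε * x * ℓ.sgn_mul_sinh_infDist X
    - ε * y * ℓ.sgn_mul_sinh_infDist Y - ε * h

/-- Theorem 3.4 (additivity of moments): if `(Z,z)` is the centroid of `(X,x)` and
`(Y,y)`, then for every directed hyperbolic line `m` (a line `ℓ` with an orientation
`ε = ±1`), the signed moment of `(Z,z)` is the sum of the signed moments of `(X,x)`
and `(Y,y)`. -/
theorem moment_additive (X Y Z : ℍ) (x y z : ℝ) (hx : 0 < x) (hy : 0 < y)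
    (hc : IsCentroid X x Y y Z z) (ℓ : HLine) (ε : ℝ) (hε : ε = 1 ∨ ε = -1) :
    ε * ℓ.sgn Z * z * Real.sinh (Metric.infDist Z ℓ.carrier)
      = ε * ℓ.sgn X * x * Real.sinh (Metric.infDist X ℓ.carrier)
        + ε * ℓ.sgn Y * y * Real.sinh (Metric.infDist Y ℓ.carrier) :=
  moment_additive_general X Y Z x y z hc ℓ ε
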